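/- arXiv:1912.09704 — 3 statements merged into one kernel-verified Lean document; each statement's English description precedes it below -/
import Mathlib

section
/- Let G be a graph, v a vertex of degree t ≥ 2 with incident edges going to neighbors v_1,...,v_t (with multiplicity), and let G_v be the Meredith extension of G at v, obtained by deleting v, adding a copy of the complete bipartite graph K_{t,t−1} with degree-(t−1) side u_1,...,u_t, and adding the edges v_i u_i for all i. Then G is t-edge-connected if and only if G_v is t-edge-connected. -/
/-- `m` is a perfect matching of the multigraph with edge multiset `E`. -/
def IsPMOf {V : Type} [DecidableEq V] (E m : Multiset (Sym2 V)) : Prop :=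
  m ≤ E ∧ ∀ v : V, (m.filter (fun e => v ∈ e)).card = 1

/-- The multigraph with edge multiset `E` is `t`-edge-connected: every
nonempty proper vertex subset has edge boundary of size at least `t`. -/
def EdgeConnGE {V : Type} [Fintype V] [DecidableEq V]
    (E : Multiset (Sym2 V)) (t : ℕ) : Prop :=
  ∀ X : Finset V, X.Nonempty → X ≠ Finset.univ →
    t ≤ (E.filter (fun e => ∃ a ∈ X, ∃ b, b ∉ X ∧ e = s(a, b))).card

/-- The vertex type of the Meredith extension at `v`: the old vertices other
than `v`, together with the two sides `u₁,…,u_t` and `w₁,…,w_{t−1}` of a copy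
of `K_{t,t−1}`. -/
abbrev MeredithV (V : Type) (v : V) (t : ℕ) : Type :=
  {x : V // x ≠ v} ⊕ (Fin t ⊕ Fin (t - 1))

/-- The edge multiset of the Meredith extension `G_v`: delete `v`, keep all
edges not incident with `v`, add a complete bipartite `K_{t,t−1}` between the
`uᵢ` and the `wⱼ`, and join `uᵢ` to `f i` (the `i`-th former neighbor of `v`). -/
def meredithEdges {V : Type} [Fintype V] [DecidableEq V]
    (E : Multiset (Sym2 V)) (v : V) (t : ℕ) (ht : 0 < t) (f : Fin t → V) :
    Multiset (Sym2 (MeredithV V v t)) :=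
  (E.filter (fun e => v ∉ e)).map (Sym2.map (fun x =>
    if h : x = v then Sum.inr (Sum.inl ⟨0, ht⟩) else Sum.inl ⟨x, h⟩)) +
  ((Finset.univ : Finset (Fin t × Fin (t - 1))).val.map
    (fun p => s(Sum.inr (Sum.inl p.1), Sum.inr (Sum.inr p.2)))) +
  ((Finset.univ : Finset (Fin t)).val.map (fun i =>
    s((if h : f i = v then Sum.inr (Sum.inl ⟨0, ht⟩) else Sum.inl ⟨f i, h⟩),
      Sum.inr (Sum.inl i))))

lemma cross_iff {W : Type} [DecidableEq W] (X : Finset W) (x y : W) :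
    (∃ a ∈ X, ∃ b, b ∉ X ∧ s(x,y) = s(a,b)) ↔ ((x ∈ X ∧ y ∉ X) ∨ (y ∈ X ∧ x ∉ X)) := by
  constructor
  · rintro ⟨a, ha, b, hb, h⟩
    rw [Sym2.eq_iff] at h
    rcases h with ⟨rfl, rfl⟩ | ⟨rfl, rfl⟩ <;> tauto
  · rintro (⟨hx, hy⟩ | ⟨hy, hx⟩)
    · exact ⟨x, hx, y, hy, rfl⟩
    · exact ⟨y, hy, x, hx, Sym2.eq_swap⟩

lemma filter_univ_and_card {α : Type} [Fintype α] [DecidableEq α] (A : Finset α)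
    (p : α → Prop) [DecidablePred p] :
    (Finset.univ.filter (fun i => i ∈ A ∧ p i)).card = (A.filter p).card := by
  congr 1; ext i; simp

lemma filter_univ_nand_card {α : Type} [Fintype α] [DecidableEq α] (A : Finset α)
    (p : α → Prop) [DecidablePred p] :
    (Finset.univ.filter (fun i => i ∉ A ∧ p i)).card = (Aᶜ.filter p).card := by
  congr 1; ext i; simp

lemma old_cut_card {V : Type} [Fintype V] [DecidableEq V] (E : Multiset (Sym2 V)) (v : V)
    (t : ℕ) (f : Fin t → V) (hf : ∀ i, f i ≠ v)
    (hdeg : E.filter (fun e => v ∈ e) =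
      (Finset.univ : Finset (Fin t)).val.map (fun i => s(v, f i)))
    (Y : Finset V) (hvY : v ∉ Y) :
    (E.filter (fun e => ∃ a ∈ Y, ∃ b, b ∉ Y ∧ e = s(a,b))).card =
    ((E.filter (fun e => v ∉ e)).filter (fun e => ∃ a ∈ Y, ∃ b, b ∉ Y ∧ e = s(a,b))).card
      + (Finset.univ.filter (fun i => f i ∈ Y)).card := by
  conv_lhs => rw [← Multiset.filter_add_not (fun e => v ∈ e) E]
  rw [Multiset.filter_add, Multiset.card_add, hdeg]
  rw [Nat.add_comm]
  congr 1
  rw [← Multiset.countP_eq_card_filter, Multiset.countP_map]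
  have : (Multiset.filter (fun i : Fin t => ∃ a ∈ Y, ∃ b, b ∉ Y ∧ s(v, f i) = s(a,b))
      (Finset.univ.val)) = (Finset.univ.filter (fun i => f i ∈ Y)).val := by
    rw [Finset.filter_val]
    apply Multiset.filter_congr
    intro i _
    rw [cross_iff]
    simp [hvY]
  rw [this]
  rfl

lemma new_cut_card {V : Type} [Fintype V] [DecidableEq V] (E : Multiset (Sym2 V)) (v : V)
    (t : ℕ) (f : Fin t → V) (hf : ∀ i, f i ≠ v)
    (hdeg : E.filter (fun e => v ∈ e) =
      (Finset.univ : Finset (Fin t)).val.map (fun i => s(v, f i)))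
    (Y : Finset V) (hvY : v ∉ Y) :
    (E.filter (fun e => ∃ a ∈ insert v Y, ∃ b, b ∉ insert v Y ∧ e = s(a,b))).card =
    ((E.filter (fun e => v ∉ e)).filter (fun e => ∃ a ∈ Y, ∃ b, b ∉ Y ∧ e = s(a,b))).card
      + (Finset.univ.filter (fun i => f i ∉ Y)).card := by
  conv_lhs => rw [← Multiset.filter_add_not (fun e => v ∈ e) E]
  rw [Multiset.filter_add, Multiset.card_add, hdeg]
  rw [Nat.add_comm]
  congr 1
  · -- non-v edges: same cut predicate
    rw [← Multiset.countP_eq_card_filter, ← Multiset.countP_eq_card_filter]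
    apply Multiset.countP_congr rfl
    intro e he
    have hve : v ∉ e := by
      have := Multiset.mem_filter.mp he
      exact this.2
    induction e with
    | _ x y =>
      have hx : x ≠ v := by rintro rfl; exact hve (Sym2.mem_mk_left _ _)
      have hy : y ≠ v := by rintro rfl; exact hve (Sym2.mem_mk_right _ _)
      apply propext
      rw [cross_iff, cross_iff]
      simp [Finset.mem_insert, hx, hy]
  · -- v-incident edges
    rw [← Multiset.countP_eq_card_filter, Multiset.countP_map]
    have : (Multiset.filter (fun i : Fin t => ∃ a ∈ insert v Y, ∃ b, b ∉ insert v Y ∧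
        s(v, f i) = s(a,b)) (Finset.univ.val)) = (Finset.univ.filter (fun i => f i ∉ Y)).val := by
      rw [Finset.filter_val]
      apply Multiset.filter_congr
      intro i _
      rw [cross_iff]
      simp [Finset.mem_insert, hf i]
    rw [this]
    rfl

lemma meredith_cut_card {V : Type} [Fintype V] [DecidableEq V]
    (E : Multiset (Sym2 V)) (v : V) (t : ℕ) (ht : 0 < t) (f : Fin t → V) (hf : ∀ i, f i ≠ v)
    (X' : Finset (MeredithV V v t)) (Y : Finset V) (A : Finset (Fin t)) (B : Finset (Fin (t-1)))
    (hY : ∀ (x : V) (h : x ≠ v), ((Sum.inl ⟨x, h⟩ : MeredithV V v t) ∈ X' ↔ x ∈ Y))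
    (hA : ∀ i : Fin t, ((Sum.inr (Sum.inl i) : MeredithV V v t) ∈ X' ↔ i ∈ A))
    (hB : ∀ j : Fin (t-1), ((Sum.inr (Sum.inr j) : MeredithV V v t) ∈ X' ↔ j ∈ B)) :
    ((meredithEdges E v t ht f).filter
        (fun e => ∃ a ∈ X', ∃ b, b ∉ X' ∧ e = s(a, b))).card =
    ((E.filter (fun e => v ∉ e)).filter
        (fun e => ∃ a ∈ Y, ∃ b, b ∉ Y ∧ e = s(a, b))).card
      + (A.card * ((t-1) - B.card) + (t - A.card) * B.card)
      + ((Finset.univ.filter (fun i => i ∈ A ∧ f i ∉ Y)).card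
         + (Finset.univ.filter (fun i => i ∉ A ∧ f i ∈ Y)).card) := by
  rw [meredithEdges, Multiset.filter_add, Multiset.filter_add,
    Multiset.card_add, Multiset.card_add]
  congr 1
  · congr 1
    · -- old edges
      rw [← Multiset.countP_eq_card_filter, Multiset.countP_map,
        ← Multiset.countP_eq_card_filter, ← Multiset.countP_eq_card_filter]
      apply Multiset.countP_congr rfl
      intro e he
      have hve : v ∉ e := (Multiset.mem_filter.mp he).2
      induction e with
      | _ x y =>
        have hx : x ≠ v := by rintro rfl; exact hve (Sym2.mem_mk_left _ _)
        have hy : y ≠ v := by rintro rfl; exact hve (Sym2.mem_mk_right _ _)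
        apply propext
        rw [Sym2.map_pair_eq, dif_neg hx, dif_neg hy, cross_iff, cross_iff,
          hY x hx, hY y hy]
    · -- bipartite edges
      rw [← Multiset.countP_eq_card_filter, Multiset.countP_map]
      have e2 : (Finset.univ.filter (fun p : Fin t × Fin (t-1) =>
          ∃ a ∈ X', ∃ b, b ∉ X' ∧
            s((Sum.inr (Sum.inl p.1) : MeredithV V v t), Sum.inr (Sum.inr p.2)) = s(a, b)))
          = (A ×ˢ Bᶜ) ∪ (Aᶜ ×ˢ B) := by
        ext ⟨i, j⟩
        rw [Finset.mem_filter]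
        rw [show (∃ a ∈ X', ∃ b, b ∉ X' ∧
            s((Sum.inr (Sum.inl i) : MeredithV V v t), Sum.inr (Sum.inr j)) = s(a, b)) ↔ _ from
          cross_iff X' _ _]
        simp only [Finset.mem_univ, true_and, Finset.mem_union, Finset.mem_product,
          Finset.mem_compl, hA, hB]
        tauto
      have : Multiset.card (Multiset.filter (fun p : Fin t × Fin (t-1) =>
          ∃ a ∈ X', ∃ b ∉ X',
            s((Sum.inr (Sum.inl p.1) : MeredithV V v t), Sum.inr (Sum.inr p.2)) = s(a, b))
          Finset.univ.val) = ((A ×ˢ Bᶜ) ∪ (Aᶜ ×ˢ B)).card := by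
        rw [← e2]; rfl
      rw [this, Finset.card_union_of_disjoint, Finset.card_product, Finset.card_product,
        Finset.card_compl, Finset.card_compl, Fintype.card_fin, Fintype.card_fin]
      · rw [Finset.disjoint_left]
        rintro ⟨i, j⟩ hij hij'
        simp only [Finset.mem_product, Finset.mem_compl] at hij hij'
        exact hij'.1 hij.1
  · -- attachment edges
    rw [← Multiset.countP_eq_card_filter, Multiset.countP_map]
    have e3 : (Finset.univ.filter (fun i : Fin t =>
        ∃ a ∈ X', ∃ b, b ∉ X' ∧
          s((if h : f i = v then (Sum.inr (Sum.inl ⟨0, ht⟩) : MeredithV V v t)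
              else Sum.inl ⟨f i, h⟩), Sum.inr (Sum.inl i)) = s(a, b)))
        = Finset.univ.filter (fun i => i ∈ A ∧ f i ∉ Y)
          ∪ Finset.univ.filter (fun i => i ∉ A ∧ f i ∈ Y) := by
      rw [← Finset.filter_or]
      apply Finset.filter_congr
      intro i _
      rw [dif_neg (hf i)]
      rw [show (∃ a ∈ X', ∃ b, b ∉ X' ∧
          s((Sum.inl ⟨f i, hf i⟩ : MeredithV V v t), Sum.inr (Sum.inl i)) = s(a, b)) ↔ _ from
        cross_iff X' _ _]
      rw [hY (f i) (hf i), hA i]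
      tauto
    have : Multiset.card (Multiset.filter (fun i : Fin t =>
        ∃ a ∈ X', ∃ b ∉ X',
          s((if h : f i = v then (Sum.inr (Sum.inl ⟨0, ht⟩) : MeredithV V v t)
              else Sum.inl ⟨f i, h⟩), Sum.inr (Sum.inl i)) = s(a, b))
        Finset.univ.val)
        = (Finset.univ.filter (fun i => i ∈ A ∧ f i ∉ Y)
          ∪ Finset.univ.filter (fun i => i ∉ A ∧ f i ∈ Y)).card := by
      rw [← e3]; rfl
    rw [this, Finset.card_union_of_disjoint]
    rw [Finset.disjoint_left]
    intro i hi hi'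
    simp only [Finset.mem_filter] at hi hi'
    exact hi'.2.1 hi.2.1

lemma filter_split_card {α : Type} [Fintype α] [DecidableEq α] (A : Finset α)
    (p : α → Prop) [DecidablePred p] :
    (Finset.univ.filter p).card =
      (Finset.univ.filter (fun i => i ∈ A ∧ p i)).card
        + (Finset.univ.filter (fun i => i ∉ A ∧ p i)).card := by
  rw [← Finset.card_union_of_disjoint, ← Finset.filter_or]
  · congr 1
    apply Finset.filter_congr
    intro i _
    tauto
  · rw [Finset.disjoint_left]
    intro i hi hi'
    simp only [Finset.mem_filter] at hi hi'
    exact hi'.2.1 hi.2.1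

/-- Meredith extension preserves `t`-edge-connectivity: if `v` has degree
`t ≥ 2` with incident edges going to the (not necessarily distinct) neighbors
`f 1, …, f t`, then the multigraph `G` is `t`-edge-connected iff its Meredith
extension `G_v` at `v` is `t`-edge-connected. -/
theorem meredith_preserves_edge_connectivity {V : Type} [Fintype V] [DecidableEq V]
    (E : Multiset (Sym2 V)) (hloopless : ∀ e ∈ E, ¬ e.IsDiag)
    (v : V) (t : ℕ) (ht : 2 ≤ t) (f : Fin t → V) (hf : ∀ i, f i ≠ v)
    (hdeg : E.filter (fun e => v ∈ e) =
      (Finset.univ : Finset (Fin t)).val.map (fun i => s(v, f i))) :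
    EdgeConnGE E t ↔
      EdgeConnGE (meredithEdges E v t (by omega) f) t := by
  have ht0 : 0 < t := by omega
  suffices h : EdgeConnGE E t ↔ EdgeConnGE (meredithEdges E v t ht0 f) t from h
  constructor
  · intro hconn X' hX'ne hX'univ
    classical
    set Y : Finset V := Finset.univ.filter
      (fun x => ∃ h : x ≠ v, (Sum.inl ⟨x, h⟩ : MeredithV V v t) ∈ X') with hYdef
    set A : Finset (Fin t) := Finset.univ.filter
      (fun i => (Sum.inr (Sum.inl i) : MeredithV V v t) ∈ X') with hAdef
    set B : Finset (Fin (t - 1)) := Finset.univ.filter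
      (fun j => (Sum.inr (Sum.inr j) : MeredithV V v t) ∈ X') with hBdef
    have hvY : v ∉ Y := by simp [hYdef]
    have hY : ∀ (x : V) (h : x ≠ v), ((Sum.inl ⟨x, h⟩ : MeredithV V v t) ∈ X' ↔ x ∈ Y) := by
      intro x h
      simp only [hYdef, Finset.mem_filter, Finset.mem_univ, true_and]
      exact ⟨fun hm => ⟨h, hm⟩, fun ⟨h', hm⟩ => hm⟩
    have hA : ∀ i : Fin t, ((Sum.inr (Sum.inl i) : MeredithV V v t) ∈ X' ↔ i ∈ A) := by
      intro i; simp [hAdef]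
    have hB : ∀ j : Fin (t - 1), ((Sum.inr (Sum.inr j) : MeredithV V v t) ∈ X' ↔ j ∈ B) := by
      intro j; simp [hBdef]
    rw [meredith_cut_card E v t ht0 f hf X' Y A B hY hA hB]
    have ha : A.card ≤ t := by
      have := Finset.card_le_univ A
      simpa using this
    have hb : B.card ≤ t - 1 := by
      have := Finset.card_le_univ B
      simpa using this
    by_cases hYe : Y = ∅
    · -- Y empty
      have hD0 : ((E.filter (fun e => v ∉ e)).filter
          (fun e => ∃ a ∈ Y, ∃ b, b ∉ Y ∧ e = s(a, b))).card = 0 := by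
        rw [Multiset.card_eq_zero, Multiset.filter_eq_nil]
        rintro e he ⟨x, hx, -⟩
        rw [hYe] at hx
        exact absurd hx (Finset.notMem_empty _)
      have hmB : (Finset.univ.filter (fun i : Fin t => i ∉ A ∧ f i ∈ Y)).card = 0 := by
        rw [Finset.card_eq_zero, Finset.filter_eq_empty_iff]
        intro i _ hcon
        rw [hYe] at hcon
        exact absurd hcon.2 (Finset.notMem_empty _)
      have hmA : (Finset.univ.filter (fun i : Fin t => i ∈ A ∧ f i ∉ Y)).card = A.card := by
        congr 1
        rw [show Finset.univ.filter (fun i : Fin t => i ∈ A ∧ f i ∉ Y) =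
            Finset.univ.filter (fun i : Fin t => i ∈ A) by
          apply Finset.filter_congr; intro i _; simp [hYe]]
        simp
      rw [hD0, hmB, hmA]
      have hab : 1 ≤ A.card ∨ 1 ≤ B.card := by
        obtain ⟨z, hz⟩ := hX'ne
        rcases z with ⟨x, hx⟩ | i | j
        · rw [hY x hx, hYe] at hz
          exact absurd hz (Finset.notMem_empty _)
        · exact Or.inl (Finset.card_pos.mpr ⟨i, (hA i).mp hz⟩)
        · exact Or.inr (Finset.card_pos.mpr ⟨j, (hB j).mp hz⟩)
      rcases Nat.lt_or_ge A.card t with hat | hat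
      · rcases Nat.eq_zero_or_pos B.card with hb0 | hb1
        · have ha1 : 1 ≤ A.card := by omega
          have haux : 1 * (t - 1) ≤ A.card * (t - 1 - B.card) :=
            Nat.mul_le_mul ha1 (by omega)
          set P1 := A.card * (t - 1 - B.card)
          set P2 := (t - A.card) * B.card
          omega
        · have haux : (t - A.card) * 1 ≤ (t - A.card) * B.card :=
            Nat.mul_le_mul le_rfl hb1
          set P1 := A.card * (t - 1 - B.card)
          set P2 := (t - A.card) * B.card
          omega
      · set P1 := A.card * (t - 1 - B.card)
        set P2 := (t - A.card) * B.card
        omega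
    · by_cases hYu : Y = Finset.univ.erase v
      · -- Y is everything except v
        have hYfull : ∀ x : V, x ≠ v → x ∈ Y := fun x h =>
          hYu ▸ Finset.mem_erase.mpr ⟨h, Finset.mem_univ _⟩
        have hD0 : ((E.filter (fun e => v ∉ e)).filter
            (fun e => ∃ a ∈ Y, ∃ b, b ∉ Y ∧ e = s(a, b))).card = 0 := by
          rw [Multiset.card_eq_zero, Multiset.filter_eq_nil]
          rintro e he ⟨p, hp, q, hq, rfl⟩
          have hve : v ∉ s(p, q) := (Multiset.mem_filter.mp he).2
          have hqv : q ≠ v := by rintro rfl; exact hve (Sym2.mem_mk_right _ _)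
          exact hq (hYfull q hqv)
        have hmA : (Finset.univ.filter (fun i : Fin t => i ∈ A ∧ f i ∉ Y)).card = 0 := by
          rw [Finset.card_eq_zero, Finset.filter_eq_empty_iff]
          intro i _ hcon
          exact hcon.2 (hYfull (f i) (hf i))
        have hmB : (Finset.univ.filter (fun i : Fin t => i ∉ A ∧ f i ∈ Y)).card
            = t - A.card := by
          rw [show Finset.univ.filter (fun i : Fin t => i ∉ A ∧ f i ∈ Y) =
              Finset.univ.filter (fun i : Fin t => i ∉ A) by
            apply Finset.filter_congr; intro i _
            simp [hYfull (f i) (hf i)]]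
          rw [show Finset.univ.filter (fun i : Fin t => i ∉ A) = Aᶜ by
            ext i; simp]
          rw [Finset.card_compl, Fintype.card_fin]
        have hnab : ¬(A.card = t ∧ B.card = t - 1) := by
          rintro ⟨hat, hbt⟩
          apply hX'univ
          have hAu : A = Finset.univ := (Finset.card_eq_iff_eq_univ A).mp (by
            rw [Fintype.card_fin]; exact hat)
          have hBu : B = Finset.univ := (Finset.card_eq_iff_eq_univ B).mp (by
            rw [Fintype.card_fin]; exact hbt)
          apply Finset.eq_univ_iff_forall.mpr
          intro z
          rcases z with ⟨x, hx⟩ | i | j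
          · exact (hY x hx).mpr (hYfull x hx)
          · exact (hA i).mpr (hAu ▸ Finset.mem_univ _)
          · exact (hB j).mpr (hBu ▸ Finset.mem_univ _)
        rw [hD0, hmA, hmB]
        rcases Nat.lt_or_ge A.card t with hat | hat
        · rcases Nat.lt_or_ge B.card (t - 1) with hbt | hbt
          · have haux : A.card * 1 ≤ A.card * (t - 1 - B.card) :=
              Nat.mul_le_mul le_rfl (by omega)
            set P1 := A.card * (t - 1 - B.card)
            set P2 := (t - A.card) * B.card
            omega
          · have hbt' : B.card = t - 1 := le_antisymm hb hbt
            have haux : 1 * B.card ≤ (t - A.card) * B.card :=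
              Nat.mul_le_mul (by omega) le_rfl
            set P1 := A.card * (t - 1 - B.card)
            set P2 := (t - A.card) * B.card
            omega
        · have hat' : A.card = t := le_antisymm ha hat
          have hbt : B.card < t - 1 := by
            rcases Nat.lt_or_ge B.card (t - 1) with h' | h'
            · exact h'
            · exact absurd ⟨hat', le_antisymm hb h'⟩ hnab
          have haux : A.card * 1 ≤ A.card * (t - 1 - B.card) :=
            Nat.mul_le_mul le_rfl (by omega)
          set P1 := A.card * (t - 1 - B.card)
          set P2 := (t - A.card) * B.card
          omega
      · -- Y nonempty and misses some old vertex ≠ v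
        have hYne : Y.Nonempty := Finset.nonempty_iff_ne_empty.mpr hYe
        have hYuniv : Y ≠ Finset.univ := fun h => hvY (h ▸ Finset.mem_univ v)
        have F1 := hconn Y hYne hYuniv
        rw [old_cut_card E v t f hf hdeg Y hvY] at F1
        have hsub : Y ⊆ Finset.univ.erase v := fun x hx =>
          Finset.mem_erase.mpr ⟨by rintro rfl; exact hvY hx, Finset.mem_univ _⟩
        have hYss : Y ⊂ Finset.univ.erase v :=
          Finset.ssubset_iff_subset_ne.mpr ⟨hsub, hYu⟩
        obtain ⟨x, hx1, hx2⟩ := Finset.exists_of_ssubset hYss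
        have hxv : x ≠ v := (Finset.mem_erase.mp hx1).1
        have hins_univ : insert v Y ≠ Finset.univ := by
          intro h
          have : x ∈ insert v Y := h ▸ Finset.mem_univ x
          rcases Finset.mem_insert.mp this with h' | h'
          · exact hxv h'
          · exact hx2 h'
        have F2 := hconn (insert v Y) ⟨v, Finset.mem_insert_self _ _⟩ hins_univ
        rw [new_cut_card E v t f hf hdeg Y hvY] at F2
        have c1 := Finset.card_filter_add_card_filter_not
          (s := A) (p := fun i => f i ∈ Y)
        have c2 := Finset.card_filter_add_card_filter_not
          (s := Aᶜ) (p := fun i => f i ∈ Y)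
        have e1 : (Finset.univ.filter (fun i : Fin t => i ∈ A ∧ f i ∈ Y)).card
            = (A.filter (fun i => f i ∈ Y)).card := filter_univ_and_card A _
        have e2 : (Finset.univ.filter (fun i : Fin t => i ∈ A ∧ f i ∉ Y)).card
            = (A.filter (fun i => f i ∉ Y)).card := filter_univ_and_card A _
        have e3 : (Finset.univ.filter (fun i : Fin t => i ∉ A ∧ f i ∈ Y)).card
            = (Aᶜ.filter (fun i => f i ∈ Y)).card := filter_univ_nand_card A _
        have e4 : (Finset.univ.filter (fun i : Fin t => i ∉ A ∧ f i ∉ Y)).card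
            = (Aᶜ.filter (fun i => f i ∉ Y)).card := filter_univ_nand_card A _
        have c3 := filter_split_card A (fun i : Fin t => f i ∈ Y)
        have c4 := filter_split_card A (fun i : Fin t => f i ∉ Y)
        have hAc : (Aᶜ : Finset (Fin t)).card = t - A.card := by
          rw [Finset.card_compl, Fintype.card_fin]
        by_cases hab : A.card = t ∧ B.card = t - 1
        · obtain ⟨hat, hbt⟩ := hab
          rw [hat, hbt, Nat.sub_self, Nat.mul_zero, Nat.sub_self, Nat.zero_mul]
          omega
        · rcases Nat.lt_or_ge B.card (t - 1) with hbt | hbt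
          · have haux : A.card * 1 ≤ A.card * (t - 1 - B.card) :=
              Nat.mul_le_mul le_rfl (by omega)
            set P1 := A.card * (t - 1 - B.card)
            set P2 := (t - A.card) * B.card
            omega
          · have hbt' : B.card = t - 1 := le_antisymm hb hbt
            have hat : A.card < t := by
              rcases Nat.lt_or_ge A.card t with h' | h'
              · exact h'
              · exact absurd ⟨le_antisymm ha h', hbt'⟩ hab
            have haux : 1 * B.card ≤ (t - A.card) * B.card :=
              Nat.mul_le_mul (by omega) le_rfl
            set P1 := A.card * (t - 1 - B.card)
            set P2 := (t - A.card) * B.card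
            omega
  · intro hconn' X hXne hXuniv
    classical
    by_cases hvX : v ∈ X
    · -- gadget goes inside
      set X' : Finset (MeredithV V v t) :=
        Finset.univ.filter (Sum.elim (fun s : {x : V // x ≠ v} => s.1 ∈ X) (fun _ => True))
        with hX'def
      have hY : ∀ (x : V) (h : x ≠ v),
          ((Sum.inl ⟨x, h⟩ : MeredithV V v t) ∈ X' ↔ x ∈ X.erase v) := by
        intro x h
        simp [hX'def, Finset.mem_erase, h]
      have hA : ∀ i : Fin t, ((Sum.inr (Sum.inl i) : MeredithV V v t) ∈ X' ↔
          i ∈ (Finset.univ : Finset (Fin t))) := by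
        intro i; simp [hX'def]
      have hB : ∀ j : Fin (t - 1), ((Sum.inr (Sum.inr j) : MeredithV V v t) ∈ X' ↔
          j ∈ (Finset.univ : Finset (Fin (t - 1)))) := by
        intro j; simp [hX'def]
      have key := meredith_cut_card E v t ht0 f hf X' (X.erase v) Finset.univ Finset.univ
        hY hA hB
      have hX'ne : X'.Nonempty := ⟨Sum.inr (Sum.inl ⟨0, ht0⟩), by simp [hX'def]⟩
      have hX'univ : X' ≠ Finset.univ := by
        intro hcon
        obtain ⟨x, hx⟩ := not_forall.mp (fun hall => hXuniv (Finset.eq_univ_iff_forall.mpr hall))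
        have hxv : x ≠ v := fun hh => hx (hh ▸ hvX)
        have : (Sum.inl ⟨x, hxv⟩ : MeredithV V v t) ∈ X' := hcon ▸ Finset.mem_univ _
        rw [hY x hxv, Finset.mem_erase] at this
        exact hx this.2
      have h1 := hconn' X' hX'ne hX'univ
      rw [key] at h1
      rw [← Finset.insert_erase hvX,
        new_cut_card E v t f hf hdeg (X.erase v) (Finset.notMem_erase v X)]
      have e1 : (Finset.univ.filter (fun i : Fin t =>
          i ∈ (Finset.univ : Finset (Fin t)) ∧ f i ∉ X.erase v)).card
          = (Finset.univ.filter (fun i : Fin t => f i ∉ X.erase v)).card := by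
        congr 1; apply Finset.filter_congr; intro i _; simp
      have e2 : (Finset.univ.filter (fun i : Fin t =>
          i ∉ (Finset.univ : Finset (Fin t)) ∧ f i ∈ X.erase v)).card = 0 := by
        simp
      rw [e1, e2] at h1
      rw [show (Finset.univ : Finset (Fin t)).card = t by simp,
        show (Finset.univ : Finset (Fin (t - 1))).card = t - 1 by simp] at h1
      simp only [Nat.sub_self, Nat.mul_zero, Nat.zero_mul] at h1
      omega
    · -- gadget outside
      set X' : Finset (MeredithV V v t) :=
        Finset.univ.filter (Sum.elim (fun s : {x : V // x ≠ v} => s.1 ∈ X) (fun _ => False))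
        with hX'def
      have hY : ∀ (x : V) (h : x ≠ v),
          ((Sum.inl ⟨x, h⟩ : MeredithV V v t) ∈ X' ↔ x ∈ X) := by
        intro x h; simp [hX'def]
      have hA : ∀ i : Fin t, ((Sum.inr (Sum.inl i) : MeredithV V v t) ∈ X' ↔
          i ∈ (∅ : Finset (Fin t))) := by
        intro i; simp [hX'def]
      have hB : ∀ j : Fin (t - 1), ((Sum.inr (Sum.inr j) : MeredithV V v t) ∈ X' ↔
          j ∈ (∅ : Finset (Fin (t - 1)))) := by
        intro j; simp [hX'def]
      have key := meredith_cut_card E v t ht0 f hf X' X ∅ ∅ hY hA hB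
      have hX'ne : X'.Nonempty := by
        obtain ⟨x, hx⟩ := hXne
        have hxv : x ≠ v := fun hh => hvX (hh ▸ hx)
        exact ⟨Sum.inl ⟨x, hxv⟩, (hY x hxv).mpr hx⟩
      have hX'univ : X' ≠ Finset.univ := by
        intro hcon
        have : (Sum.inr (Sum.inl ⟨0, ht0⟩) : MeredithV V v t) ∈ X' := hcon ▸ Finset.mem_univ _
        rw [hA] at this
        exact absurd this (Finset.notMem_empty _)
      have h1 := hconn' X' hX'ne hX'univ
      rw [key] at h1
      rw [old_cut_card E v t f hf hdeg X hvX]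
      have e1 : (Finset.univ.filter (fun i : Fin t =>
          i ∉ (∅ : Finset (Fin t)) ∧ f i ∈ X)).card
          = (Finset.univ.filter (fun i : Fin t => f i ∈ X)).card := by
        congr 1; apply Finset.filter_congr; intro i _; simp
      have e2 : (Finset.univ.filter (fun i : Fin t =>
          i ∈ (∅ : Finset (Fin t)) ∧ f i ∉ X)).card = 0 := by
        simp
      rw [e1, e2] at h1
      simp only [Finset.card_empty, Nat.zero_mul, Nat.mul_zero, Nat.sub_zero] at h1
      omega
end

section
/- Let H be a multigraph and let N_0, N_1, N_2 be three pairwise disjoint perfect matchings of H whose union forms a connected 3-edge-colorable cubic spanning subgraph H̃. If H is t-edge-connected (t ≥ 2), then H + (N_0 + N_1 + N_2) (duplicating each edge of each N_i) is (t+2)-edge-connected and (if H is r-regular) (r+3)-regular. -/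
lemma per_edge {V : Type} [Fintype V] [DecidableEq V] (X : Finset V) (e : Sym2 V)
    (he : ¬ e.IsDiag) :
    (∑ v ∈ X, (if v ∈ e then 1 else 0))
      = 2 * (if (∀ v ∈ e, v ∈ X) then 1 else 0)
        + (if (∃ a ∈ X, ∃ b, b ∉ X ∧ e = s(a, b)) then 1 else 0) := by
  induction e using Sym2.inductionOn with
  | hf a b =>
    have hab : a ≠ b := by simpa using he
    have hboth : (∀ v ∈ (s(a, b) : Sym2 V), v ∈ X) ↔ (a ∈ X ∧ b ∈ X) := by
      constructor
      · intro h; exact ⟨h a (by simp), h b (by simp)⟩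
      · rintro ⟨h1, h2⟩ v hv
        rcases Sym2.mem_iff.mp hv with rfl | rfl <;> assumption
    have hcut : (∃ x ∈ X, ∃ y, y ∉ X ∧ (s(a, b) : Sym2 V) = s(x, y)) ↔
        ((a ∈ X ∧ b ∉ X) ∨ (b ∈ X ∧ a ∉ X)) := by
      constructor
      · rintro ⟨x, hx, y, hy, h⟩
        rcases Sym2.eq_iff.mp h with ⟨rfl, rfl⟩ | ⟨rfl, rfl⟩
        · exact Or.inl ⟨hx, hy⟩
        · exact Or.inr ⟨hx, hy⟩
      · rintro (⟨h1, h2⟩ | ⟨h1, h2⟩)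
        · exact ⟨a, h1, b, h2, rfl⟩
        · exact ⟨b, h1, a, h2, Sym2.eq_swap⟩
    have hsum : (∑ v ∈ X, (if v ∈ (s(a, b) : Sym2 V) then 1 else 0))
        = (if a ∈ X then 1 else 0) + (if b ∈ X then 1 else 0) := by
      have : ∀ v ∈ X, (if v ∈ (s(a, b) : Sym2 V) then 1 else 0)
          = (if v = a then 1 else 0) + (if v = b then 1 else 0) := by
        intro v _
        by_cases h1 : v = a <;> by_cases h2 : v = b <;>
          simp_all [Sym2.mem_iff]
      rw [Finset.sum_congr rfl this, Finset.sum_add_distrib,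
        Finset.sum_ite_eq' X a (fun _ => 1), Finset.sum_ite_eq' X b (fun _ => 1)]
    rw [hsum]
    simp only [hboth, hcut]
    by_cases ha : a ∈ X <;> by_cases hb : b ∈ X <;> simp [ha, hb]

lemma edge_sum_lemma {V : Type} [Fintype V] [DecidableEq V] (X : Finset V)
    (m : Multiset (Sym2 V)) (hl : ∀ e ∈ m, ¬ e.IsDiag) :
    (∑ v ∈ X, (m.filter (fun e => v ∈ e)).card)
      = 2 * (m.filter (fun e => ∀ v ∈ e, v ∈ X)).card
        + (m.filter (fun e => ∃ a ∈ X, ∃ b, b ∉ X ∧ e = s(a, b))).card := by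
  induction m using Multiset.induction with
  | empty => simp
  | cons e m ih =>
    have he : ¬ e.IsDiag := hl e (Multiset.mem_cons_self e m)
    have hrest : ∀ e' ∈ m, ¬ e'.IsDiag := fun e' h => hl e' (Multiset.mem_cons_of_mem h)
    simp only [Multiset.filter_cons, Multiset.card_add, apply_ite Multiset.card,
      Multiset.card_singleton, Multiset.card_zero]
    rw [Finset.sum_add_distrib, ih hrest, per_edge X e he]
    ring

lemma pm_cut_parity {V : Type} [Fintype V] [DecidableEq V] (X : Finset V)
    (m : Multiset (Sym2 V)) (hl : ∀ e ∈ m, ¬ e.IsDiag)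
    (hpm : ∀ v : V, (m.filter (fun e => v ∈ e)).card = 1) :
    (m.filter (fun e => ∃ a ∈ X, ∃ b, b ∉ X ∧ e = s(a, b))).card % 2 = X.card % 2 := by
  have h := edge_sum_lemma X m hl
  simp only [hpm, Finset.sum_const, smul_eq_mul, mul_one] at h
  omega

/-- Let `H` be a `t`-edge-connected multigraph (`t ≥ 2`) with three pairwise
disjoint perfect matchings `N₀, N₁, N₂` whose union `H̃` is a connected
(3-edge-colorable cubic) spanning subgraph. Then the multigraph
`H + (N₀ + N₁ + N₂)`, obtained by duplicating each edge of each `Nᵢ`, is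
`(t+2)`-edge-connected, and if `H` is `r`-regular it is `(r+3)`-regular. -/
theorem adding_three_disjoint_pms {V : Type} [Fintype V] [DecidableEq V]
    (E : Multiset (Sym2 V)) (hloopless : ∀ e ∈ E, ¬ e.IsDiag)
    (N₀ N₁ N₂ : Multiset (Sym2 V))
    (h₀ : IsPMOf E N₀) (h₁ : IsPMOf E N₁) (h₂ : IsPMOf E N₂)
    (hdisj : N₀ + N₁ + N₂ ≤ E)
    (hconn₃ : ∀ X : Finset V, X.Nonempty → X ≠ Finset.univ →
      1 ≤ ((N₀ + N₁ + N₂).filter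
        (fun e => ∃ a ∈ X, ∃ b, b ∉ X ∧ e = s(a, b))).card)
    (t : ℕ) (ht : 2 ≤ t) (hconn : EdgeConnGE E t) :
    EdgeConnGE (E + (N₀ + N₁ + N₂)) (t + 2) ∧
    (∀ r : ℕ, (∀ v : V, (E.filter (fun e => v ∈ e)).card = r) →
      ∀ v : V, ((E + (N₀ + N₁ + N₂)).filter (fun e => v ∈ e)).card = r + 3) := by
  have hl₀ : ∀ e ∈ N₀, ¬ e.IsDiag := fun e he => hloopless e (Multiset.mem_of_le h₀.1 he)
  have hl₁ : ∀ e ∈ N₁, ¬ e.IsDiag := fun e he => hloopless e (Multiset.mem_of_le h₁.1 he)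
  have hl₂ : ∀ e ∈ N₂, ¬ e.IsDiag := fun e he => hloopless e (Multiset.mem_of_le h₂.1 he)
  constructor
  · intro X hne hX
    have hE := hconn X hne hX
    have h3 := hconn₃ X hne hX
    have p0 := pm_cut_parity X N₀ hl₀ h₀.2
    have p1 := pm_cut_parity X N₁ hl₁ h₁.2
    have p2 := pm_cut_parity X N₂ hl₂ h₂.2
    simp only [Multiset.filter_add, Multiset.card_add] at h3 ⊢
    omega
  · intro r hr v
    simp only [Multiset.filter_add, Multiset.card_add, hr v, h₀.2 v, h₁.2 v, h₂.2 v]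
end

section
/- Let G be a multigraph, and suppose G contains a triangle T on vertices z_1, z_2, z_3 where each pair is joined by exactly k parallel edges, and each z_i is a cut vertex separating off an odd-order piece in the sense that there exist disjoint vertex sets S_1, S_2, S_3 with z_i ∈ S_i, |S_i| odd, V(G) = S_1 ∪ S_2 ∪ S_3, and all edges between distinct S_i, S_j are the k parallel edges z_i z_j. Then no family of 4k−2 pairwise disjoint perfect matchings of G can satisfy that for each i exactly 2k−1 of them meet the edges of T incident with z_i. -/
lemma dc_aux {V : Type} [DecidableEq V] (s : Finset V) (m : Multiset (Sym2 V)) :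
    ∑ v ∈ s, (m.filter (fun e => v ∈ e)).card
      = (m.map (fun e => (s.filter (fun v => v ∈ e)).card)).sum := by
  induction m using Multiset.induction with
  | empty => simp
  | cons e m ih =>
    simp only [Multiset.filter_cons, Multiset.map_cons, Multiset.sum_cons,
      Multiset.card_add, Finset.sum_add_distrib, ih, apply_ite Multiset.card,
      Multiset.card_singleton, Multiset.card_zero, ← Finset.card_filter]

lemma even_msum (m : Multiset ℕ) (h : ∀ x ∈ m, Even x) : Even m.sum := by
  induction m using Multiset.induction with
  | empty => simp
  | cons a m ih =>
    rw [Multiset.sum_cons]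
    exact (h a (Multiset.mem_cons_self a m)).add
      (ih fun x hx => h x (Multiset.mem_cons_of_mem hx))

/-- Let `G` be a multigraph containing a triangle `T` on `z₁, z₂, z₃`, each
pair joined by exactly `k` parallel edges, such that the vertex set splits
into disjoint odd pieces `S₁, S₂, S₃` with `zᵢ ∈ Sᵢ` and all edges between
distinct pieces being the triangle edges. Then no family of `4k − 2` pairwise
disjoint perfect matchings can be such that, for each `i`, exactly `2k − 1` of
its members use an edge of `T` incident with `zᵢ`. -/
theorem no_family_meeting_triangle {V : Type} [Fintype V] [DecidableEq V]
    (E : Multiset (Sym2 V)) (hloopless : ∀ e ∈ E, ¬ e.IsDiag)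
    (k : ℕ) (hk : 1 ≤ k) (z : Fin 3 → V) (S : Fin 3 → Finset V)
    (hzS : ∀ i, z i ∈ S i) (hodd : ∀ i, Odd (S i).card)
    (hSdisj : ∀ i j, i ≠ j → Disjoint (S i) (S j))
    (hScover : ∀ v : V, ∃ i, v ∈ S i)
    (hT : ∀ i j, i ≠ j → E.count s(z i, z j) = k)
    (hbetween : ∀ e ∈ E, (∃ i, ∀ x ∈ e, x ∈ S i) ∨
      ∃ i j, i ≠ j ∧ e = s(z i, z j))
    (N : Fin (4 * k - 2) → Multiset (Sym2 V))
    (hpm : ∀ a, IsPMOf E (N a)) (hNdisj : (∑ a, N a) ≤ E)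
    (hmeet : ∀ i : Fin 3,
      (Finset.univ.filter (fun a => ∃ e ∈ N a,
        ∃ j, j ≠ i ∧ e = s(z i, z j))).card = 2 * k - 1) :
    False := by
  -- Every perfect matching uses a triangle edge at z 0.
  have key : ∀ a, ∃ e ∈ N a, ∃ j, j ≠ (0 : Fin 3) ∧ e = s(z 0, z j) := by
    intro a
    by_contra hcon
    push_neg at hcon
    obtain ⟨hle, hdeg⟩ := hpm a
    have hsum : ∑ v ∈ S 0, ((N a).filter (fun e => v ∈ e)).card = (S 0).card := by
      rw [Finset.sum_congr rfl (fun v _ => hdeg v)]; simp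
    have heven : ∀ e ∈ N a, Even ((S 0).filter (fun v => v ∈ e)).card := by
      intro e he
      have heE : e ∈ E := Multiset.mem_of_le hle he
      rcases hbetween e heE with ⟨i, hi⟩ | ⟨i, j, hij, rfl⟩
      · induction e using Sym2.ind with
        | _ x y =>
          by_cases h0 : i = 0
          · subst h0
            have hx : x ∈ S 0 := hi x (by simp)
            have hy : y ∈ S 0 := hi y (by simp)
            have hxy : x ≠ y := by
              intro h; exact hloopless _ heE (by simp [h])
            have : (S 0).filter (fun v => v ∈ s(x, y)) = {x, y} := by
              ext v
              simp only [Finset.mem_filter, Sym2.mem_iff, Finset.mem_insert,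
                Finset.mem_singleton]
              constructor
              · rintro ⟨_, h | h⟩ <;> simp [h]
              · rintro (rfl | rfl) <;> simp [hx, hy]
            rw [this, Finset.card_pair hxy]
            exact even_two
          · have : (S 0).filter (fun v => v ∈ s(x, y)) = ∅ := by
              ext v
              simp only [Finset.mem_filter, Sym2.mem_iff, Finset.notMem_empty,
                iff_false, not_and]
              rintro hv (rfl | rfl)
              · exact (Finset.disjoint_left.mp (hSdisj i 0 h0) (hi v (by simp)) hv)
              · exact (Finset.disjoint_left.mp (hSdisj i 0 h0) (hi v (by simp)) hv)
            rw [this]; simp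
      · have hi0 : i ≠ 0 := by
          rintro rfl
          exact hcon _ he j (Ne.symm hij) rfl
        have hj0 : j ≠ 0 := by
          rintro rfl
          exact hcon _ he i hij (Sym2.eq_swap)
        have : (S 0).filter (fun v => v ∈ s(z i, z j)) = ∅ := by
          ext v
          simp only [Finset.mem_filter, Sym2.mem_iff, Finset.notMem_empty,
            iff_false, not_and]
          rintro hv (rfl | rfl)
          · exact (Finset.disjoint_left.mp (hSdisj i 0 hi0) (hzS i) hv)
          · exact (Finset.disjoint_left.mp (hSdisj j 0 hj0) (hzS j) hv)
        rw [this]; simp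
    have hEsum : Even (((N a).map (fun e => ((S 0).filter (fun v => v ∈ e)).card)).sum) := by
      apply even_msum
      intro x hx
      obtain ⟨e, he, rfl⟩ := Multiset.mem_map.mp hx
      exact heven e he
    rw [← dc_aux, hsum] at hEsum
    exact (Nat.not_even_iff_odd.mpr (hodd 0)) hEsum
  have := hmeet 0
  rw [Finset.filter_true_of_mem (fun a _ => key a)] at this
  simp only [Finset.card_univ, Fintype.card_fin] at this
  omega
end
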